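/- Let g, h, k₁, k₂, r be symmetric n×n real matrices with g invertible. Define the pairing Ω_{(g,h)}((k₁,l₁),(k₂,l₂)) = Tr(g^{-1}k₁g^{-1}h)Tr(g^{-1}k₂) - Tr(g^{-1}k₂g^{-1}h)Tr(g^{-1}k₁) + Tr(g^{-1}k₁g^{-1}l₂) - Tr(g^{-1}k₂g^{-1}l₁). Then the pair ξ = (r, rg^{-1}h + hg^{-1}r - Tr(g^{-1}r)·h) satisfies Ω_{(g,h)}(ξ, (k,l)) = -Tr(g^{-1}kg^{-1}rg^{-1}h) - Tr(g^{-1}rg^{-1}kg^{-1}h) + Tr(g^{-1}rg^{-1}h)Tr(g^{-1}k) + Tr(g^{-1}rg^{-1}l) for all symmetric (k,l). -/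
import Mathlib


open Matrix

/-- The pairing `Ω_{(g,h)}((k₁,l₁),(k₂,l₂))` on pairs of symmetric matrices, the
pointwise (matrix-level) form of the symplectic structure on momentum-weighted metrics. -/
noncomputable def metricOmega {n : ℕ} (g h : Matrix (Fin n) (Fin n) ℝ)
    (ξ₁ ξ₂ : Matrix (Fin n) (Fin n) ℝ × Matrix (Fin n) (Fin n) ℝ) : ℝ :=
  (g⁻¹ * ξ₁.1 * g⁻¹ * h).trace * (g⁻¹ * ξ₂.1).trace
    - (g⁻¹ * ξ₂.1 * g⁻¹ * h).trace * (g⁻¹ * ξ₁.1).trace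
    + (g⁻¹ * ξ₁.1 * g⁻¹ * ξ₂.2).trace
    - (g⁻¹ * ξ₂.1 * g⁻¹ * ξ₁.2).trace

/-- Let `g, h, r` and `k, l` be symmetric `n × n` real matrices with `g`
invertible.  Then the pair `ξ = (r, r g⁻¹ h + h g⁻¹ r − Tr(g⁻¹ r)·h)` satisfies
`Ω_{(g,h)}(ξ, (k,l)) = −Tr(g⁻¹ k g⁻¹ r g⁻¹ h) − Tr(g⁻¹ r g⁻¹ k g⁻¹ h)
  + Tr(g⁻¹ r g⁻¹ h)·Tr(g⁻¹ k) + Tr(g⁻¹ r g⁻¹ l)`. -/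
theorem hamiltonian_vector_field_pairing
    {n : ℕ} (g h r k l : Matrix (Fin n) (Fin n) ℝ)
    (hg : IsUnit g.det) (hgs : g.IsSymm) (hhs : h.IsSymm) (hrs : r.IsSymm)
    (hks : k.IsSymm) (hls : l.IsSymm) :
    metricOmega g h (r, r * g⁻¹ * h + h * g⁻¹ * r - (g⁻¹ * r).trace • h) (k, l)
      = - (g⁻¹ * k * g⁻¹ * r * g⁻¹ * h).trace
        - (g⁻¹ * r * g⁻¹ * k * g⁻¹ * h).trace
        + (g⁻¹ * r * g⁻¹ * h).trace * (g⁻¹ * k).trace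
        + (g⁻¹ * r * g⁻¹ * l).trace := by
  simp only [metricOmega, Matrix.mul_add, Matrix.mul_sub, Matrix.mul_smul,
    Matrix.trace_add, Matrix.trace_sub, Matrix.trace_smul, smul_eq_mul]
  have h1 : (g⁻¹ * k * g⁻¹ * (r * g⁻¹ * h)).trace
      = (g⁻¹ * k * g⁻¹ * r * g⁻¹ * h).trace := by
    rw [show g⁻¹ * k * g⁻¹ * (r * g⁻¹ * h) = g⁻¹ * k * g⁻¹ * r * g⁻¹ * h by
      noncomm_ring]
  have h2 : (g⁻¹ * k * g⁻¹ * (h * g⁻¹ * r)).trace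
      = (g⁻¹ * r * g⁻¹ * k * g⁻¹ * h).trace := by
    rw [show g⁻¹ * k * g⁻¹ * (h * g⁻¹ * r) = (g⁻¹ * k * g⁻¹ * h) * (g⁻¹ * r) by
      noncomm_ring, Matrix.trace_mul_comm,
      show g⁻¹ * r * (g⁻¹ * k * g⁻¹ * h) = g⁻¹ * r * g⁻¹ * k * g⁻¹ * h by
      noncomm_ring]
  rw [h1, h2]
  ring
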